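/- Let ξ, η ∈ ℝ³ and define the normal vectors of the surface {(ζ, ζ₁², ζ₂ζ₃)} ⊂ ℝ⁵ at ζ by n¹_ζ = (2ζ₁, 0, 0, −1, 0) and n²_ζ = (0, ζ₃, ζ₂, 0, −1). Then the four vectors n¹_ξ, n²_ξ, n¹_η, n²_η are linearly dependent over ℝ if and only if ξ₁ = η₁, or (ξ₂ = η₂ and ξ₃ = η₃). -/
import Mathlib


/-- Normal vector n¹ of the surface {(ζ, ζ₁², ζ₂ζ₃)} at ζ. -/
noncomputable def n1b (ζ : Fin 3 → ℝ) : Fin 5 → ℝ := ![2 * ζ 0, 0, 0, -1, 0]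

/-- Normal vector n² of the surface {(ζ, ζ₁², ζ₂ζ₃)} at ζ. -/
noncomputable def n2b (ζ : Fin 3 → ℝ) : Fin 5 → ℝ := ![0, ζ 2, ζ 1, 0, -1]

theorem stmt1 (ξ η : Fin 3 → ℝ) :
    (∃ k₁ k₂ l₁ l₂ : ℝ, ¬(k₁ = 0 ∧ k₂ = 0 ∧ l₁ = 0 ∧ l₂ = 0) ∧
      k₁ • n1b ξ + k₂ • n2b ξ + l₁ • n1b η + l₂ • n2b η = 0)
    ↔ (ξ 0 = η 0 ∨ (ξ 1 = η 1 ∧ ξ 2 = η 2)) := by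
  constructor
  · rintro ⟨k₁, k₂, l₁, l₂, hnz, heq⟩
    have h0 := congrFun heq 0
    have h1 := congrFun heq 1
    have h2 := congrFun heq 2
    have h3 := congrFun heq 3
    have h4 := congrFun heq 4
    simp [n1b, n2b] at h0 h1 h2 h3 h4
    have hl1 : l₁ = -k₁ := by linarith
    have hl2 : l₂ = -k₂ := by linarith
    subst hl1 hl2
    by_cases hk1 : k₁ = 0
    · by_cases hk2 : k₂ = 0
      · exact absurd ⟨hk1, hk2, by rw [hk1]; ring, by rw [hk2]; ring⟩ hnz
      · right
        constructor
        · have : k₂ * (ξ 1 - η 1) = 0 := by nlinarith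
          have := mul_eq_zero.mp this
          rcases this with h | h
          · exact absurd h hk2
          · linarith
        · have : k₂ * (ξ 2 - η 2) = 0 := by nlinarith
          rcases mul_eq_zero.mp this with h | h
          · exact absurd h hk2
          · linarith
    · left
      have : k₁ * (ξ 0 - η 0) = 0 := by nlinarith
      rcases mul_eq_zero.mp this with h | h
      · exact absurd h hk1
      · linarith
  · rintro (h | ⟨h1, h2⟩)
    · refine ⟨1, 0, -1, 0, by norm_num, ?_⟩
      funext i
      fin_cases i <;> simp [n1b, n2b, h]
    · refine ⟨0, 1, 0, -1, by norm_num, ?_⟩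
      funext i
      fin_cases i <;> simp [n1b, n2b, h1, h2]
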